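/- arXiv:2603.17089 — 2 statements merged into one kernel-verified Lean document; each statement's English description precedes it below -/
import Mathlib

section
/- Suppose the residuals satisfy ‖e_j‖₂ ≤ ε_A·‖z̄_j‖₂ + c₀ for all j and η_k = 0 for all k (the cases ε_B = 0 and ε_C = 0). Then for every k ≥ 0, ‖ȳ_k − ŷ_k‖₂ ≤ ε_A · Σ_{l=0}^{k−1} ‖C·A^l‖₂·‖z̄_{k−1−l}‖₂ + c₀ · Σ_{l=0}^{k−1} ‖C·A^l‖₂; in particular the first (proportional) term vanishes whenever z̄_j = 0 for all j < k, leaving only the offset term. -/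
/-- Euclidean norm of a vector in `ℝⁿ`. -/
noncomputable def vecEnorm {n : ℕ} (v : Fin n → ℝ) : ℝ := Real.sqrt (∑ i, v i ^ 2)

/-- Operator 2-norm of a real matrix (induced by the Euclidean norms). -/
noncomputable def mOpNorm {m n : ℕ} (A : Matrix (Fin m) (Fin n) ℝ) : ℝ :=
  ‖LinearMap.toContinuousLinearMap (Matrix.toEuclideanLin A)‖

lemma vecEnorm_eq {n : ℕ} (v : Fin n → ℝ) :
    vecEnorm v = ‖(WithLp.equiv 2 (Fin n → ℝ)).symm v‖ := by
  rw [EuclideanSpace.norm_eq, vecEnorm]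
  congr 1
  exact Finset.sum_congr rfl fun i _ => by rw [Real.norm_eq_abs, sq_abs]; rfl

lemma vecEnorm_mulVec_le {m n : ℕ} (M : Matrix (Fin m) (Fin n) ℝ) (v : Fin n → ℝ) :
    vecEnorm (M.mulVec v) ≤ mOpNorm M * vecEnorm v := by
  rw [vecEnorm_eq, vecEnorm_eq, mOpNorm]
  have := (LinearMap.toContinuousLinearMap (Matrix.toEuclideanLin M)).le_opNorm
    ((WithLp.equiv 2 (Fin n → ℝ)).symm v)
  simpa [Matrix.toEuclideanLin_apply] using this

lemma vecEnorm_nonneg {n : ℕ} (v : Fin n → ℝ) : 0 ≤ vecEnorm v := Real.sqrt_nonneg _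

lemma mOpNorm_nonneg {m n : ℕ} (M : Matrix (Fin m) (Fin n) ℝ) : 0 ≤ mOpNorm M :=
  norm_nonneg _

lemma vecEnorm_sum_le {n : ℕ} (s : Finset ℕ) (f : ℕ → Fin n → ℝ) :
    vecEnorm (∑ i ∈ s, f i) ≤ ∑ i ∈ s, vecEnorm (f i) := by
  have : (WithLp.equiv 2 (Fin n → ℝ)).symm (∑ i ∈ s, f i)
      = ∑ i ∈ s, (WithLp.equiv 2 (Fin n → ℝ)).symm (f i) :=
    map_sum (WithLp.linearEquiv 2 ℝ (Fin n → ℝ)).symm f s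
  rw [vecEnorm_eq, this]
  refine (norm_sum_le _ _).trans ?_
  simp [vecEnorm_eq]

/-- proportional-plus-offset output-discrepancy bound in the case
`ε_B = 0`, `ε_C = 0`; the proportional term vanishes when `z̄ⱼ = 0` for `j < k`. -/
theorem output_discrepancy_proportional_plus_offset
    (nz m p : ℕ) (hnz : 0 < nz) (hm : 0 < m) (hp : 0 < p)
    (A : Matrix (Fin nz) (Fin nz) ℝ) (B : Matrix (Fin nz) (Fin m) ℝ)
    (C : Matrix (Fin p) (Fin nz) ℝ) (D : Matrix (Fin p) (Fin m) ℝ)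
    (zbar : ℕ → Fin nz → ℝ) (ubar : ℕ → Fin m → ℝ)
    (e : ℕ → Fin nz → ℝ) (η : ℕ → Fin p → ℝ)
    (hdyn : ∀ k, zbar (k + 1) = A.mulVec (zbar k) + B.mulVec (ubar k) + e k)
    (ybar : ℕ → Fin p → ℝ)
    (hy : ∀ k, ybar k = C.mulVec (zbar k) + D.mulVec (ubar k) + η k)
    (zhat : ℕ → Fin nz → ℝ)
    (hz0 : zhat 0 = zbar 0)
    (hzrec : ∀ k, zhat (k + 1) = A.mulVec (zhat k) + B.mulVec (ubar k))
    (yhat : ℕ → Fin p → ℝ)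
    (hyhat : ∀ k, yhat k = C.mulVec (zhat k) + D.mulVec (ubar k))
    (εA c0 : ℝ) (hεA : 0 ≤ εA) (hc0 : 0 ≤ c0)
    (he : ∀ j, vecEnorm (e j) ≤ εA * vecEnorm (zbar j) + c0)
    (hη : ∀ k, η k = 0)
    (k : ℕ) :
    vecEnorm (ybar k - yhat k)
        ≤ εA * (∑ l ∈ Finset.range k, mOpNorm (C * A ^ l) * vecEnorm (zbar (k - 1 - l)))
          + c0 * ∑ l ∈ Finset.range k, mOpNorm (C * A ^ l)
    ∧ ((∀ j < k, zbar j = 0) →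
        vecEnorm (ybar k - yhat k) ≤ c0 * ∑ l ∈ Finset.range k, mOpNorm (C * A ^ l)) := by
  -- state difference formula
  have hzdiff : ∀ k, zbar k - zhat k
      = ∑ l ∈ Finset.range k, (A ^ l).mulVec (e (k - 1 - l)) := by
    intro k
    induction k with
    | zero => simp [hz0]
    | succ k ih =>
      rw [hdyn k, hzrec k]
      have h1 : A.mulVec (zbar k) + B.mulVec (ubar k) + e k
          - (A.mulVec (zhat k) + B.mulVec (ubar k))
          = A.mulVec (zbar k - zhat k) + e k := by
        rw [Matrix.mulVec_sub]; abel
      rw [h1, ih, Finset.sum_range_succ']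
      have h2 : A.mulVec (∑ l ∈ Finset.range k, (A ^ l).mulVec (e (k - 1 - l)))
          = ∑ l ∈ Finset.range k, (A ^ (l + 1)).mulVec (e (k - 1 - l)) := by
        simp only [← Matrix.mulVecLin_apply, map_sum]
        refine Finset.sum_congr rfl fun l _ => ?_
        simp [Matrix.mulVecLin_apply, pow_succ', Matrix.mulVec_mulVec]
      simp only [h2]
      congr 1
      · refine Finset.sum_congr rfl fun l _ => ?_
        have hidx : k + 1 - 1 - (l + 1) = k - 1 - l := by omega
        rw [hidx]
      · simp
  have hydiff : ybar k - yhat k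
      = ∑ l ∈ Finset.range k, (C * A ^ l).mulVec (e (k - 1 - l)) := by
    rw [hy, hyhat, hη]
    have : C.mulVec (zbar k) + D.mulVec (ubar k) + 0
        - (C.mulVec (zhat k) + D.mulVec (ubar k))
        = C.mulVec (zbar k - zhat k) := by
      rw [Matrix.mulVec_sub]; abel
    rw [this, hzdiff]
    simp only [← Matrix.mulVecLin_apply, map_sum]
    refine Finset.sum_congr rfl fun l _ => ?_
    simp [Matrix.mulVecLin_apply, Matrix.mulVec_mulVec]
  have hmain : vecEnorm (ybar k - yhat k)
      ≤ ∑ l ∈ Finset.range k, mOpNorm (C * A ^ l) * (εA * vecEnorm (zbar (k - 1 - l)) + c0) := by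
    rw [hydiff]
    refine (vecEnorm_sum_le _ _).trans (Finset.sum_le_sum fun l _ => ?_)
    refine (vecEnorm_mulVec_le _ _).trans ?_
    exact mul_le_mul_of_nonneg_left (he _) (mOpNorm_nonneg _)
  constructor
  · refine hmain.trans ?_
    rw [Finset.mul_sum, Finset.mul_sum, ← Finset.sum_add_distrib]
    refine Finset.sum_le_sum fun l _ => ?_
    ring_nf
    nlinarith [mOpNorm_nonneg (C * A ^ l), vecEnorm_nonneg (zbar (k - 1 - l)), hεA, hc0]
  · intro hz
    refine hmain.trans ?_
    rw [Finset.mul_sum]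
    refine Finset.sum_le_sum fun l hl => ?_
    have : zbar (k - 1 - l) = 0 := by
      apply hz
      simp at hl
      omega
    rw [this]
    have : vecEnorm (0 : Fin nz → ℝ) = 0 := by simp [vecEnorm]
    rw [this, mul_zero, zero_add, mul_comm]
end

section
/- Let x = (δ, ω, E'q) be admissible, u ∈ ℝ, and suppose x⁺ = (δ⁺, ω⁺, E'q⁺) := f(x, u) is also admissible. Assume μ ≥ 0 and E_fd ≥ 0. Define the sixth-component residual e₆ := (E'q⁺·sin δ⁺ − E'q,s·sin δ_s) − (1 − α_q·κ)·(E'q·sin δ − E'q,s·sin δ_s). Then |e₆| ≤ c₆·‖Φ(x) − Φ(x_s)‖₂ + E'q,max·(Δt·ω_max)², where c₆ := 2·α_q·μ + α_q·E_fd + E'q,max·Δt. -/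
open Real

/-- Parameters of the discretized synchronous generator model. -/
structure GenParams where
  Δt : ℝ
  M : ℝ
  Td0 : ℝ
  D : ℝ
  ωs : ℝ
  Vinf : ℝ
  XS : ℝ
  Xd : ℝ
  Xd' : ℝ
  Xe : ℝ
  Efd : ℝ
  hΔt : 0 < Δt
  hM : 0 < M
  hTd0 : 0 < Td0
  hXS : XS ≠ 0

namespace GenParams

variable (P : GenParams)

noncomputable def αd : ℝ := P.Δt / P.M
noncomputable def αq : ℝ := P.Δt / P.Td0
noncomputable def γ : ℝ := P.Vinf / P.XS
noncomputable def κ : ℝ := (P.Xd + P.Xe) / P.XS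
noncomputable def μ : ℝ := (P.Xd - P.Xd') * P.Vinf / P.XS

/-- The discretized generator dynamics `f : ℝ³ × ℝ → ℝ³`. -/
noncomputable def f (x : Fin 3 → ℝ) (u : ℝ) : Fin 3 → ℝ :=
  ![x 0 + P.Δt * (x 1 - P.ωs),
    x 1 + P.αd * (u - P.D * (x 1 - P.ωs) - P.γ * (x 2 * Real.sin (x 0))),
    x 2 + P.αq * (P.Efd - P.κ * x 2 + P.μ * Real.cos (x 0))]

/-- The Koopman lifting `Φ : ℝ³ → ℝ⁷`. -/
noncomputable def Φ (x : Fin 3 → ℝ) : Fin 7 → ℝ :=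
  ![x 0, x 1 - P.ωs, x 2, Real.sin (x 0), Real.cos (x 0),
    x 2 * Real.sin (x 0), x 2 * Real.cos (x 0)]

/-- The Koopman `A` matrix. -/
noncomputable def Amat : Matrix (Fin 7) (Fin 7) ℝ :=
  !![1, P.Δt, 0, 0, 0, 0, 0;
     0, 1 - P.αd * P.D, 0, 0, 0, -(P.αd * P.γ), 0;
     0, 0, 1 - P.αq * P.κ, 0, P.αq * P.μ, 0, 0;
     0, 0, 0, 1, 0, 0, 0;
     0, 0, 0, 0, 1, 0, 0;
     0, 0, 0, 0, 0, 1 - P.αq * P.κ, 0;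
     0, 0, 0, 0, 0, 0, 1 - P.αq * P.κ]

/-- The Koopman `B` matrix (as a vector, since `m = 1`). -/
noncomputable def Bvec : Fin 7 → ℝ := ![0, P.αd, 0, 0, 0, 0, 0]

/-- The Koopman output matrix `C`. -/
noncomputable def Cmat : Matrix (Fin 2) (Fin 7) ℝ :=
  !![0, 1, 0, 0, 0, 0, 0;
     0, 0, 0, 0, 0, P.γ, 0]

/-- Admissible states of the operating regime. -/
def Admissible (ωmax Eqmax : ℝ) (x : Fin 3 → ℝ) : Prop :=
  |x 1 - P.ωs| ≤ ωmax ∧ 0 ≤ x 2 ∧ x 2 ≤ Eqmax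

end GenParams

/-- Euclidean norm of a vector in `ℝⁿ`. -/
noncomputable def enorm {n : ℕ} (v : Fin n → ℝ) : ℝ := Real.sqrt (∑ i, v i ^ 2)

lemma abs_comp_le_enorm {n : ℕ} (v : Fin n → ℝ) (i : Fin n) : |v i| ≤ _root_.enorm v := by
  rw [_root_.enorm, ← Real.sqrt_sq_eq_abs]
  exact Real.sqrt_le_sqrt
    (Finset.single_le_sum (fun j _ => sq_nonneg (v j)) (Finset.mem_univ i))

lemma abs_sin_sub_sin (a b : ℝ) : |Real.sin a - Real.sin b| ≤ |a - b| := by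
  rw [Real.sin_sub_sin, abs_mul, abs_mul]
  have h1 : |Real.sin ((a - b) / 2)| ≤ |a - b| / 2 := by
    simpa [abs_div] using Real.abs_sin_le_abs (x := (a - b) / 2)
  have h2 : |Real.cos ((a + b) / 2)| ≤ 1 := Real.abs_cos_le_one _
  calc |(2 : ℝ)| * |Real.sin ((a - b) / 2)| * |Real.cos ((a + b) / 2)|
      ≤ |(2 : ℝ)| * (|a - b| / 2) * 1 := by gcongr
    _ = |a - b| := by
        rw [abs_of_nonneg (by norm_num : (0:ℝ) ≤ 2)]; ring

/-- bound on the sixth-component residual `e₆` of the Koopman embedding. -/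
theorem koopman_sixth_component_residual_bound
    (P : GenParams) (ωmax Eqmax : ℝ) (hωmax : 0 ≤ ωmax) (hEqmax : 0 ≤ Eqmax)
    (hsmall : P.Δt * ωmax ≤ 3)
    (xs : Fin 3 → ℝ) (us : ℝ) (hequil : P.f xs us = xs)
    (hμ : 0 ≤ P.μ) (hEfd : 0 ≤ P.Efd)
    (x : Fin 3 → ℝ) (u : ℝ)
    (hx : P.Admissible ωmax Eqmax x)
    (hx' : P.Admissible ωmax Eqmax (P.f x u)) :
    |((P.f x u) 2 * Real.sin ((P.f x u) 0) - xs 2 * Real.sin (xs 0))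
        - (1 - P.αq * P.κ) * (x 2 * Real.sin (x 0) - xs 2 * Real.sin (xs 0))|
      ≤ (2 * P.αq * P.μ + P.αq * P.Efd + Eqmax * P.Δt) * _root_.enorm (P.Φ x - P.Φ xs)
          + Eqmax * (P.Δt * ωmax) ^ 2 := by
  obtain ⟨hω, hE0, hE1⟩ := hx
  obtain ⟨hω', hE0', hE1'⟩ := hx'
  have hαq : 0 < P.αq := div_pos P.hΔt P.hTd0
  -- equilibrium facts
  have h0 := congrFun hequil 0
  have h2 := congrFun hequil 2
  simp [GenParams.f] at h0 h2
  have hxs1 : xs 1 = P.ωs := by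
    rcases h0 with h | h
    · exact absurd h (ne_of_gt P.hΔt)
    · linarith
  have h2' : P.Efd - P.κ * xs 2 + P.μ * Real.cos (xs 0) = 0 := by
    rcases h2 with h | h
    · exact absurd h (ne_of_gt hαq)
    · linarith
  have hfx0 : (P.f x u) 0 = x 0 + P.Δt * (x 1 - P.ωs) := by simp [GenParams.f]
  have hfx2 : (P.f x u) 2
      = x 2 + P.αq * (P.Efd - P.κ * x 2 + P.μ * Real.cos (x 0)) := by
    simp [GenParams.f]
  set N := _root_.enorm (P.Φ x - P.Φ xs) with hN
  have hd1 : |x 1 - P.ωs| ≤ N := by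
    have h := abs_comp_le_enorm (P.Φ x - P.Φ xs) 1
    have he : (P.Φ x - P.Φ xs) 1 = x 1 - P.ωs := by
      simp [GenParams.Φ, hxs1]
    rwa [he] at h
  have hd3 : |Real.sin (x 0) - Real.sin (xs 0)| ≤ N := by
    have h := abs_comp_le_enorm (P.Φ x - P.Φ xs) 3
    have he : (P.Φ x - P.Φ xs) 3 = Real.sin (x 0) - Real.sin (xs 0) := by
      simp [GenParams.Φ]
    rwa [he] at h
  have hd4 : |Real.cos (x 0) - Real.cos (xs 0)| ≤ N := by
    have h := abs_comp_le_enorm (P.Φ x - P.Φ xs) 4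
    have he : (P.Φ x - P.Φ xs) 4 = Real.cos (x 0) - Real.cos (xs 0) := by
      simp [GenParams.Φ]
    rwa [he] at h
  have hNnn : 0 ≤ N := Real.sqrt_nonneg _
  -- key algebraic identity
  have key : ((P.f x u) 2 * Real.sin ((P.f x u) 0) - xs 2 * Real.sin (xs 0))
        - (1 - P.αq * P.κ) * (x 2 * Real.sin (x 0) - xs 2 * Real.sin (xs 0))
      = P.αq * P.Efd * (Real.sin (x 0) - Real.sin (xs 0))
        + P.αq * P.μ * (Real.cos (x 0) * Real.sin (x 0)
            - Real.cos (xs 0) * Real.sin (xs 0))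
        + (P.f x u) 2 * (Real.sin ((P.f x u) 0) - Real.sin (x 0)) := by
    linear_combination Real.sin (x 0) * hfx2 + P.αq * Real.sin (xs 0) * h2'
  rw [key]
  -- bound each piece
  have b1 : |P.αq * P.Efd * (Real.sin (x 0) - Real.sin (xs 0))|
      ≤ P.αq * P.Efd * N := by
    rw [abs_mul, abs_of_nonneg (mul_nonneg hαq.le hEfd)]
    exact mul_le_mul_of_nonneg_left hd3 (mul_nonneg hαq.le hEfd)
  have bcs : |Real.cos (x 0) * Real.sin (x 0) - Real.cos (xs 0) * Real.sin (xs 0)|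
      ≤ 2 * N := by
    have hrw : Real.cos (x 0) * Real.sin (x 0) - Real.cos (xs 0) * Real.sin (xs 0)
        = Real.cos (x 0) * (Real.sin (x 0) - Real.sin (xs 0))
          + Real.sin (xs 0) * (Real.cos (x 0) - Real.cos (xs 0)) := by ring
    rw [hrw]
    calc _ ≤ |Real.cos (x 0) * (Real.sin (x 0) - Real.sin (xs 0))|
              + |Real.sin (xs 0) * (Real.cos (x 0) - Real.cos (xs 0))| :=
            abs_add_le _ _
      _ ≤ 1 * N + 1 * N := by
            rw [abs_mul, abs_mul]
            gcongr
            · exact Real.abs_cos_le_one _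
            · exact Real.abs_sin_le_one _
      _ = 2 * N := by ring
  have b2 : |P.αq * P.μ * (Real.cos (x 0) * Real.sin (x 0)
        - Real.cos (xs 0) * Real.sin (xs 0))| ≤ P.αq * P.μ * (2 * N) := by
    rw [abs_mul, abs_of_nonneg (mul_nonneg hαq.le hμ)]
    exact mul_le_mul_of_nonneg_left bcs (mul_nonneg hαq.le hμ)
  have b3 : |(P.f x u) 2 * (Real.sin ((P.f x u) 0) - Real.sin (x 0))|
      ≤ Eqmax * (P.Δt * N) := by
    rw [abs_mul]
    have hs : |Real.sin ((P.f x u) 0) - Real.sin (x 0)| ≤ P.Δt * N := by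
      calc |Real.sin ((P.f x u) 0) - Real.sin (x 0)|
          ≤ |(P.f x u) 0 - x 0| := abs_sin_sub_sin _ _
        _ = P.Δt * |x 1 - P.ωs| := by
            rw [hfx0]; rw [show x 0 + P.Δt * (x 1 - P.ωs) - x 0
              = P.Δt * (x 1 - P.ωs) by ring, abs_mul, abs_of_pos P.hΔt]
        _ ≤ P.Δt * N := mul_le_mul_of_nonneg_left hd1 P.hΔt.le
    have hEp : |(P.f x u) 2| ≤ Eqmax := by
      rw [abs_of_nonneg hE0']; exact hE1'
    exact mul_le_mul hEp hs (abs_nonneg _) hEqmax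
  have hsq : 0 ≤ Eqmax * (P.Δt * ωmax) ^ 2 :=
    mul_nonneg hEqmax (sq_nonneg _)
  calc |_ + _ + _| ≤ |P.αq * P.Efd * (Real.sin (x 0) - Real.sin (xs 0))
          + P.αq * P.μ * (Real.cos (x 0) * Real.sin (x 0)
            - Real.cos (xs 0) * Real.sin (xs 0))|
        + |(P.f x u) 2 * (Real.sin ((P.f x u) 0) - Real.sin (x 0))| := abs_add_le _ _
    _ ≤ (|P.αq * P.Efd * (Real.sin (x 0) - Real.sin (xs 0))|
          + |P.αq * P.μ * (Real.cos (x 0) * Real.sin (x 0)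
            - Real.cos (xs 0) * Real.sin (xs 0))|)
        + |(P.f x u) 2 * (Real.sin ((P.f x u) 0) - Real.sin (x 0))| := by
          gcongr; exact abs_add_le _ _
    _ ≤ (P.αq * P.Efd * N + P.αq * P.μ * (2 * N)) + Eqmax * (P.Δt * N) := by
          gcongr
    _ ≤ (2 * P.αq * P.μ + P.αq * P.Efd + Eqmax * P.Δt) * N
          + Eqmax * (P.Δt * ωmax) ^ 2 := by nlinarith [hsq]
end
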